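/- For every n ≥ 0, the elementary symmetric function e_n[X] equals the sum over all compositions α of n of the functions C_α[X;q] := C_{α_1} C_{α_2} ··· C_{α_ℓ}(1). -/

import Mathlib

open Finset MvPolynomial

noncomputable section

/-- Base field `F = ℚ(q)`. -/
abbrev F : Type := RatFunc ℚ

/-- The parameter `q`. -/
noncomputable def q : F := RatFunc.X

/-- The ring of symmetric functions `Λ = F[p₁, p₂, p₃, …]`, where the variable
`X k` represents the power sum `p_{k+1}`. -/
abbrev SymF : Type := MvPolynomial ℕ F

/-- `pp k` is the power sum `p_k` for `k ≥ 1`. -/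
noncomputable def pp (k : ℕ) : SymF := MvPolynomial.X (k - 1)

/-- Complete homogeneous symmetric functions, via Newton's identity
`(n+1) h_{n+1} = ∑_{k=1}^{n+1} p_k h_{n+1-k}`. -/
noncomputable def hN : ℕ → SymF
  | 0 => 1
  | n + 1 => ((n : F) + 1)⁻¹ • ∑ k ∈ Finset.range (n + 1), pp (k + 1) * hN (n - k)
  termination_by n => n
  decreasing_by omega

/-- Elementary symmetric functions, via Newton's identity
`(n+1) e_{n+1} = ∑_{k=1}^{n+1} (-1)^{k-1} p_k e_{n+1-k}`. -/
noncomputable def eN : ℕ → SymF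
  | 0 => 1
  | n + 1 => ((n : F) + 1)⁻¹ • ∑ k ∈ Finset.range (n + 1), ((-1 : F) ^ k) • (pp (k + 1) * eN (n - k))
  termination_by n => n
  decreasing_by omega

/-- `hh m = h_m` for `m ≥ 0` and `0` for `m < 0`. -/
noncomputable def hh (m : ℤ) : SymF := if 0 ≤ m then hN m.toNat else 0

/-- `ee m = e_m` for `m ≥ 0` and `0` for `m < 0`. -/
noncomputable def ee (m : ℤ) : SymF := if 0 ≤ m then eN m.toNat else 0

/-- The plethystic translation `f[X] ↦ f[X + (1-q)z]`, determined by
`p_k ↦ p_k + (1-q^k) z^k`.  The coefficient of `z^r` computes `h_r[X(1-q)]^⊥ f`. -/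
noncomputable def Tq : SymF →ₐ[F] Polynomial SymF :=
  MvPolynomial.aeval fun k =>
    Polynomial.C (MvPolynomial.X k) +
      Polynomial.C (MvPolynomial.C (1 - q ^ (k + 1))) * Polynomial.X ^ (k + 1)

/-- The operator `h_r[X(1-q)]^⊥`. -/
noncomputable def Dq (r : ℕ) (P : SymF) : SymF := (Tq P).coeff r

/-- The plethystic translation `f[X] ↦ f[X - z]`, determined by `p_k ↦ p_k - z^k`;
one has `f[X - z] = ∑_k (-z)^k (e_k^⊥ f)[X]`. -/
noncomputable def T1 : SymF →ₐ[F] Polynomial SymF :=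
  MvPolynomial.aeval fun k =>
    Polynomial.C (MvPolynomial.X k) - Polynomial.X ^ (k + 1)

/-- The operator `e_r^⊥`. -/
noncomputable def eperp (r : ℕ) (P : SymF) : SymF := ((-1 : F) ^ r) • (T1 P).coeff r

/-- The Hall–Littlewood creation operator
`ℂ_m P = (-1/q)^{m-1} ∑_{r ≥ 0} q^{-r} h_{m+r} · (h_r[X(1-q)])^⊥ P`
(the sum is finite: terms with `r > deg_z (Tq P)` vanish). -/
noncomputable def Cop (m : ℤ) (P : SymF) : SymF :=
  ((-q⁻¹ : F) ^ (m - 1)) •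
    ∑ r ∈ Finset.range ((Tq P).natDegree + 1), ((q⁻¹ : F) ^ r) • (hh (m + r) * Dq r P)

/-- The creation operator `𝔹_m P = ∑_{r ≥ 0} (-1)^r e_{m+r} · (h_r[X(1-q)])^⊥ P`. -/
noncomputable def Bop (m : ℤ) (P : SymF) : SymF :=
  ∑ r ∈ Finset.range ((Tq P).natDegree + 1), ((-1 : F) ^ r) • (ee (m + r) * Dq r P)

/-- The Bernstein (Schur) creation operator `S_m P = ∑_{r ≥ 0} (-1)^r h_{m+r} · e_r^⊥ P`. -/
noncomputable def Sop (m : ℤ) (P : SymF) : SymF :=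
  ∑ r ∈ Finset.range ((T1 P).natDegree + 1), ((-1 : F) ^ r) • (hh (m + r) * eperp r P)

/-- `C_α[X;q] = ℂ_{α₁} ℂ_{α₂} ⋯ ℂ_{α_ℓ}(1)`. -/
noncomputable def Cfun : List ℕ → SymF
  | [] => 1
  | a :: l => Cop a (Cfun l)

/-- `B_α[X;q] = 𝔹_{α_ℓ} 𝔹_{α_{ℓ-1}} ⋯ 𝔹_{α₁}(1)`. -/
noncomputable def Bfun (l : List ℕ) : SymF := l.foldl (fun acc a => Bop a acc) 1

end

/-- The touch set `{0} ∪ Des(c)` of a composition `c` of `n`: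
the set of partial sums `c₁ + ⋯ + c_i` for `0 ≤ i < ℓ(c)` (0-based touch rows). -/
def touchSet {n : ℕ} (c : Composition n) : Finset ℕ :=
  (Finset.range c.length).image fun i => c.sizeUpTo i

/-- The descent set of a composition: its proper nonzero partial sums. -/
def DesSet {n : ℕ} (c : Composition n) : Finset ℕ := (touchSet c).erase 0

/-- `Refines β α` means `β ≤ α`: `β` is finer than `α`, i.e. `Des(α) ⊆ Des(β)`. -/
abbrev Refines {n : ℕ} (β α : Composition n) : Prop := touchSet α ⊆ touchSet β

/-- `doffC α β = doff_α(DP(β))` for `β ≤ α`: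
`∑_{k=1}^{ℓ(α)} (ℓ(α)-k) r_k` where `r_k` is the number of parts of `β`
lying inside the `k`-th part of `α`. -/
def doffC {n : ℕ} (α β : Composition n) : ℕ :=
  ∑ k ∈ Finset.range α.length,
    (α.length - 1 - k) *
      ((touchSet β).filter fun s => α.sizeUpTo k ≤ s ∧ s < α.sizeUpTo (k + 1)).card

/-- The reversed composition. -/
def revC {n : ℕ} (c : Composition n) : Composition n :=
  ⟨c.blocks.reverse, fun hi => c.blocks_pos (List.mem_reverse.mp hi), by
    rw [List.sum_reverse]; exact c.blocks_sum⟩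

/-- A Dyck path from `(0,0)` to `(n,n)`, encoded by its arm sequence:
`arm i` is the number of cells between the path and the diagonal in row `i+1`
(rows are 0-indexed here). -/
structure DyckPath (n : ℕ) where
  arm : ℕ → ℕ
  arm_zero : 0 < n → arm 0 = 0
  arm_step : ∀ i, i + 1 < n → arm (i + 1) ≤ arm i + 1
  arm_outside : ∀ i, n ≤ i → arm i = 0

/-- `area(D) = ∑ᵢ aᵢ`. -/
def area {n : ℕ} (D : DyckPath n) : ℕ := ∑ i ∈ Finset.range n, D.arm i

/-- `dinv(D) = #{(i,j) : i < j, aᵢ - aⱼ ∈ {0,1}}`. -/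
def dinv {n : ℕ} (D : DyckPath n) : ℕ :=
  ((Finset.range n ×ˢ Finset.range n).filter fun p =>
      p.1 < p.2 ∧ (D.arm p.1 = D.arm p.2 ∨ D.arm p.1 = D.arm p.2 + 1)).card

/-- `IsTouch D α` says that `touch(D) = α`: the rows where the arm vanishes are
exactly the partial sums of `α`. -/
def IsTouch {n : ℕ} (D : DyckPath n) (α : Composition n) : Prop :=
  ∀ i < n, (D.arm i = 0 ↔ i ∈ touchSet α)

/-- `doff_α(D)`, for a path `D` whose touch composition refines `α`. -/
def doffD {n : ℕ} (α : Composition n) (D : DyckPath n) : ℕ :=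
  ∑ k ∈ Finset.range α.length,
    (α.length - 1 - k) *
      ((Finset.Ico (α.sizeUpTo k) (α.sizeUpTo (k + 1))).filter fun i => D.arm i = 0).card

instance {n : ℕ} : DecidableEq (Composition n) := fun a b =>
  decidable_of_iff (a.blocks = b.blocks) ⟨fun h => by cases a; cases b; simpa using h,
    fun h => by rw [h]⟩

noncomputable section

/-- Plethystic evaluation at the alphabet `1 - q`: the algebra map `p_k ↦ 1 - q^k`. -/
noncomputable def evOneMinusQ : SymF →ₐ[F] F := MvPolynomial.aeval fun k => 1 - q ^ (k + 1)

/-- The cells of the Young diagram of a partition given as a (weakly decreasing)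
list of parts: `(i, j)` with `j < lᵢ` (row `i`, column `j`, both 0-based). -/
def pcells (l : List ℕ) : Finset (ℕ × ℕ) :=
  (Finset.range l.length ×ˢ Finset.range (l.foldr max 0)).filter fun c => c.2 < l.getD c.1 0

/-- The arm of a cell: number of cells strictly to its right in its row. -/
def armC (l : List ℕ) (c : ℕ × ℕ) : ℕ := l.getD c.1 0 - c.2 - 1

/-- The leg of a cell: number of cells of the diagram in its column in later rows. -/
def legC (l : List ℕ) (c : ℕ × ℕ) : ℕ :=
  ((Finset.Ico (c.1 + 1) l.length).filter fun i => c.2 < l.getD i 0).card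

/-- The `k`-th part (`k ≥ 1`) of the conjugate partition: `μ'_k = #{i : μᵢ ≥ k}`. -/
def conjPart (l : List ℕ) (k : ℕ) : ℕ := l.countP fun x => k ≤ x

/-- The multiplicity `m_i(μ')` of `i` among the parts of the conjugate partition. -/
def mConj (l : List ℕ) (i : ℕ) : ℕ :=
  ((Finset.Icc 1 l.headI).filter fun k => conjPart l k = i).card

/-- `n(μ') = ∑ (k-1) μ'_k`. -/
def nConj (l : List ℕ) : ℕ := ∑ k ∈ Finset.Icc 1 l.headI, (k - 1) * conjPart l k

/-- The `q`-Pochhammer symbol `(q;q)_k = ∏_{j=1}^k (1 - q^j)` as an element of `F`. -/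
noncomputable def qpoch (k : ℕ) : F := ∏ j ∈ Finset.Icc 1 k, (1 - q ^ j)

end


/-!
Let `E(t) = ∑ eₙ tⁿ` and `H(t) = ∑ hₙ tⁿ`. Newton's identities say exactly that the logarithmic
derivatives of `E` and `H` are `∑ (-1)ᵏ p_{k+1} tᵏ` and `∑ p_{k+1} tᵏ`, and a power series over a
torsion-free ring is determined by its constant term and its logarithmic derivative. Comparing
logarithmic derivatives gives `H(-t) E(t) = 1`, i.e. `e_{n+1} = ∑_{s+j=n} (-1)ˢ h_{s+1} e_j`, and shows
that the translation `X ↦ X + (1-q)z` sends `E(t)` to `E_{1-q}(zt) E(t)`, where `E_{1-q}` is the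
`E`-series of the alphabet `1 - q`. Hence
`ℂ_{a+1} e_b = ∑_{r+j=b} (-1)ᵃ q^{-(a+r)} e_r[1-q] h_{a+r+1} e_j`, and in `∑_{a+b=n} ℂ_{a+1} e_b` the
coefficient of `h_{s+1} e_j` is `q^{-s} ∑_{a+r=s} (-1)ᵃ e_r[1-q] = (-1)ˢ`, so the sum is `e_{n+1}`.
Splitting off the first part of a composition, `∑_{α ⊨ n+1} C_α = ∑_{a+b=n} ℂ_{a+1} ∑_{β ⊨ b} C_β`,
and the theorem follows by induction on `n`.
-/

namespace PowerSeries

variable {R S : Type*} [CommSemiring R] [CommSemiring S]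

def HasLogDeriv (f g : R⟦X⟧) : Prop := d⁄dX R f = g * f

theorem hasLogDeriv_one : HasLogDeriv (1 : R⟦X⟧) 0 := by
  rw [HasLogDeriv, derivative_one, zero_mul]

theorem HasLogDeriv.mul {f₁ f₂ g₁ g₂ : R⟦X⟧} (h₁ : HasLogDeriv f₁ g₁) (h₂ : HasLogDeriv f₂ g₂) :
    HasLogDeriv (f₁ * f₂) (g₁ + g₂) := by
  rw [HasLogDeriv, Derivation.leibniz, h₁, h₂, smul_eq_mul, smul_eq_mul]
  ring

theorem HasLogDeriv.map {f g : R⟦X⟧} (h : HasLogDeriv f g) (φ : R →+* S) :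
    HasLogDeriv (map φ f) (map φ g) := by
  rw [HasLogDeriv, ← map_mul, ← h]
  ext n
  simp [coeff_derivative]

theorem HasLogDeriv.rescale {f g : R⟦X⟧} (h : HasLogDeriv f g) (a : R) :
    HasLogDeriv (rescale a f) (C a * rescale a g) := by
  rw [HasLogDeriv, mul_assoc, ← map_mul, ← h]
  ext n
  simp only [coeff_derivative, coeff_rescale, coeff_C_mul]
  ring

theorem HasLogDeriv.eq_of_constantCoeff_eq [IsAddTorsionFree R] {f₁ f₂ g : R⟦X⟧}
    (h₁ : HasLogDeriv f₁ g) (h₂ : HasLogDeriv f₂ g) (h₀ : constantCoeff f₁ = constantCoeff f₂) :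
    f₁ = f₂ := by
  ext n
  induction n using Nat.strong_induction_on with
  | _ n ih =>
    rcases n with _ | n
    · simpa using h₀
    · have hd : coeff n (d⁄dX R f₁) = coeff n (d⁄dX R f₂) := by
        rw [h₁, h₂, coeff_mul, coeff_mul]
        exact sum_congr rfl fun p hp => by rw [ih p.2 (Finset.Nat.antidiagonal.snd_lt hp)]
      simp only [coeff_derivative, mul_comm _ ((n : R) + 1)] at hd
      exact IsAddTorsionFree.nsmul_right_injective n.succ_ne_zero (by simpa [nsmul_eq_mul] using hd)

end PowerSeries

theorem Finset.Nat.sum_antidiagonal_antidiagonal_assoc {M : Type*} [AddCommMonoid M] (n : ℕ)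
    (f : ℕ → ℕ → ℕ → M) :
    ∑ p ∈ antidiagonal n, ∑ r ∈ antidiagonal p.2, f p.1 r.1 r.2 =
      ∑ p ∈ antidiagonal n, ∑ r ∈ antidiagonal p.1, f r.1 r.2 p.2 := by
  rw [sum_sigma', sum_sigma']
  refine sum_nbij' (fun x => ⟨(x.1.1 + x.2.1, x.2.2), (x.1.1, x.2.1)⟩)
    (fun x => ⟨(x.2.1, x.2.2 + x.1.2), (x.2.2, x.1.2)⟩) ?_ ?_ ?_ ?_ ?_
  all_goals
    rintro ⟨⟨a, b⟩, c, d⟩ hx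
    simp only [mem_sigma, HasAntidiagonal.mem_antidiagonal, Sigma.mk.injEq, Prod.mk.injEq,
      heq_eq_eq, and_true, true_and] at hx ⊢
    try omega

theorem Composition.cons_headI_tail {n : ℕ} (c : Composition (n + 1)) :
    (c.blocks.headI - 1 + 1) :: c.blocks.tail = c.blocks := by
  obtain ⟨a, l, hc⟩ := List.exists_cons_of_ne_nil (c.blocks_eq_nil.not.mpr n.succ_ne_zero)
  have ha : 0 < a := c.blocks_pos (hc ▸ List.mem_cons_self)
  simp only [hc, List.headI_cons, List.tail_cons, Nat.sub_add_cancel ha]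

theorem Composition.sum_blocks_succ {M : Type*} [AddCommMonoid M] (f : List ℕ → M) (n : ℕ) :
    ∑ c : Composition (n + 1), f c.blocks =
      ∑ p ∈ antidiagonal n, ∑ c : Composition p.2, f ((p.1 + 1) :: c.blocks) := by
  have hsum (c : Composition (n + 1)) : c.blocks.headI - 1 + 1 + c.blocks.tail.sum = n + 1 := by
    rw [← List.sum_cons, c.cons_headI_tail, c.blocks_sum]
  have hext {x y : Σ p : ℕ × ℕ, Composition p.2} (h₁ : x.1 = y.1)
      (h₂ : x.2.blocks = y.2.blocks) : x = y := by
    obtain ⟨p, c⟩ := x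
    obtain ⟨p', c'⟩ := y
    obtain rfl : p = p' := h₁
    obtain rfl : c = c' := Composition.ext h₂
    rfl
  rw [sum_sigma']
  refine sum_bij' (fun c _ => ⟨(c.blocks.headI - 1, c.blocks.tail.sum),
      ⟨c.blocks.tail, fun hi => c.blocks_pos (List.mem_of_mem_tail hi), rfl⟩⟩)
    (fun x hx => ⟨(x.1.1 + 1) :: x.2.blocks, fun hi => ?_, ?_⟩) ?_ ?_ ?_ ?_ ?_
  · rcases List.mem_cons.mp hi with rfl | h
    · exact Nat.succ_pos _
    · exact x.2.blocks_pos h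
  · have := HasAntidiagonal.mem_antidiagonal.mp (mem_sigma.mp hx).1
    rw [List.sum_cons, x.2.blocks_sum]
    omega
  · intro c _
    simp only [mem_sigma, HasAntidiagonal.mem_antidiagonal, mem_univ, and_true]
    have := hsum c
    omega
  · exact fun _ _ => mem_univ _
  · exact fun c _ => Composition.ext c.cons_headI_tail
  · rintro ⟨⟨a, b⟩, c⟩ _
    exact hext (by simp [c.blocks_sum]) rfl
  · exact fun c _ => congrArg f c.cons_headI_tail.symm

open scoped PowerSeries
open PowerSeries (HasLogDeriv mk rescale)

theorem mul_natCast_add_one_eq_smul {R A : Type*} [CommSemiring R] [Semiring A] [Algebra R A]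
    (n : ℕ) (x : A) : x * ((n : A) + 1) = ((n : R) + 1) • x := by
  rw [Algebra.smul_def, ← Nat.cast_succ, ← Nat.cast_succ, map_natCast, Nat.cast_comm]

theorem hN_zero : hN 0 = 1 := by rw [hN]

theorem eN_zero : eN 0 = 1 := by rw [eN]

theorem hh_natCast (k : ℕ) : hh k = hN k := by simp [hh]

theorem ee_natCast (k : ℕ) : ee k = eN k := by simp [ee]

noncomputable def eSeries : SymF⟦X⟧ := mk eN

noncomputable def hSeries : SymF⟦X⟧ := mk hN

noncomputable def pSeries : SymF⟦X⟧ := mk fun k => pp (k + 1)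

theorem hasLogDeriv_hSeries : HasLogDeriv hSeries pSeries := by
  refine PowerSeries.ext fun n => ?_
  rw [PowerSeries.coeff_derivative, PowerSeries.coeff_mul, hSeries, PowerSeries.coeff_mk,
    mul_natCast_add_one_eq_smul (R := F), hN, smul_inv_smul₀ (by exact_mod_cast n.succ_ne_zero),
    Nat.sum_antidiagonal_eq_sum_range_succ_mk]
  simp [pSeries]

theorem hasLogDeriv_eSeries : HasLogDeriv eSeries (rescale (-1) pSeries) := by
  refine PowerSeries.ext fun n => ?_
  rw [PowerSeries.coeff_derivative, PowerSeries.coeff_mul, eSeries, PowerSeries.coeff_mk,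
    mul_natCast_add_one_eq_smul (R := F), eN, smul_inv_smul₀ (by exact_mod_cast n.succ_ne_zero),
    Nat.sum_antidiagonal_eq_sum_range_succ_mk]
  simp [pSeries, PowerSeries.coeff_rescale, Algebra.smul_def, mul_assoc]

theorem rescale_hSeries_mul_eSeries : rescale (-1) hSeries * eSeries = 1 := by
  refine (hasLogDeriv_hSeries.rescale (-1) |>.mul hasLogDeriv_eSeries).eq_of_constantCoeff_eq ?_ ?_
  · convert PowerSeries.hasLogDeriv_one using 1
    simp
  · simp only [← PowerSeries.coeff_zero_eq_constantCoeff_apply, PowerSeries.coeff_one,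
      PowerSeries.coeff_mul, Nat.antidiagonal_zero, sum_singleton, PowerSeries.coeff_rescale,
      eSeries, hSeries, PowerSeries.coeff_mk, hN_zero, eN_zero]
    simp

theorem eN_succ_eq_sum (n : ℕ) :
    eN (n + 1) = ∑ p ∈ antidiagonal n, (-1 : F) ^ p.1 • (hN (p.1 + 1) * eN p.2) := by
  have h := congrArg (PowerSeries.coeff (n + 1)) rescale_hSeries_mul_eSeries
  rw [PowerSeries.coeff_mul, Nat.sum_antidiagonal_succ, PowerSeries.coeff_one,
    if_neg n.succ_ne_zero] at h
  simp only [hSeries, eSeries, PowerSeries.coeff_rescale, PowerSeries.coeff_mk, hN_zero, pow_succ,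
    pow_zero, mul_neg_one, neg_mul, sum_neg_distrib, one_mul] at h
  simpa [Algebra.smul_def, mul_assoc, add_neg_eq_zero] using h

/-- `eOneSubQ k = e_k[1 - q]`: the generating function of the alphabet `1 - q` is
`(1 + t) / (1 + q t)`. -/
noncomputable def eOneSubQ : ℕ → F
  | 0 => 1
  | k + 1 => (1 - q) * (-q) ^ k

@[simp] theorem eOneSubQ_zero : eOneSubQ 0 = 1 := rfl

theorem eOneSubQ_succ (k : ℕ) : eOneSubQ (k + 1) = (1 - q) * (-q) ^ k := rfl

theorem sum_antidiagonal_neg_one_pow_mul_eOneSubQ (n : ℕ) :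
    ∑ p ∈ antidiagonal n, (-1 : F) ^ p.1 * eOneSubQ p.2 = (-q) ^ n := by
  induction n with
  | zero => simp
  | succ n ih =>
    rw [Nat.sum_antidiagonal_succ]
    simp only [pow_succ, mul_neg_one, neg_mul, sum_neg_distrib, ih, pow_zero, one_mul,
      eOneSubQ_succ]
    ring

theorem hasLogDeriv_eOneSubQ :
    HasLogDeriv (mk eOneSubQ) (mk fun k => (-1 : F) ^ k * (1 - q ^ (k + 1))) := by
  refine PowerSeries.ext fun n => ?_
  have hsplit : ∑ p ∈ antidiagonal n, (-1 : F) ^ p.1 * (1 - q ^ (p.1 + 1)) * eOneSubQ p.2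
      = (-q) ^ n - q * ∑ p ∈ antidiagonal n, (-q) ^ p.1 * eOneSubQ p.2 := by
    rw [← sum_antidiagonal_neg_one_pow_mul_eOneSubQ, mul_sum, ← sum_sub_distrib]
    exact sum_congr rfl fun p _ => by ring
  simp only [PowerSeries.coeff_derivative, PowerSeries.coeff_mul, PowerSeries.coeff_mk, hsplit]
  rcases n with _ | n
  · simp [eOneSubQ]
  · have hconst : ∀ p ∈ antidiagonal n, (-q) ^ p.1 * eOneSubQ (p.2 + 1) = (1 - q) * (-q) ^ n := by
      intro p hp
      rw [← mem_antidiagonal.mp hp, eOneSubQ_succ, pow_add]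
      ring
    rw [Nat.sum_antidiagonal_succ', sum_congr rfl hconst, sum_const, Nat.card_antidiagonal,
      nsmul_eq_mul]
    simp only [eOneSubQ_succ, eOneSubQ_zero]
    push_cast
    ring

theorem Tq_X (k : ℕ) :
    Tq (X k) = Polynomial.C (X k) + Polynomial.C (C (1 - q ^ (k + 1))) * Polynomial.X ^ (k + 1) :=
  MvPolynomial.aeval_X _ _

theorem map_Tq_rescale_pSeries :
    PowerSeries.map (Tq : SymF →+* Polynomial SymF) (rescale (-1) pSeries) =
      PowerSeries.C Polynomial.X *
          rescale Polynomial.X (PowerSeries.map (algebraMap F (Polynomial SymF))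
            (mk fun k => (-1 : F) ^ k * (1 - q ^ (k + 1)))) +
        PowerSeries.map Polynomial.C (rescale (-1) pSeries) := by
  refine PowerSeries.ext fun n => ?_
  simp only [pSeries, pp, add_tsub_cancel_right, PowerSeries.coeff_map, PowerSeries.coeff_rescale,
    PowerSeries.coeff_mk, RingHom.coe_coe, map_mul, map_pow, map_neg, map_one, Tq_X, map_sub,
    map_add, PowerSeries.coeff_C_mul, Polynomial.algebraMap_apply, algebraMap_eq]
  ring

theorem Tq_eSeries :
    PowerSeries.map (Tq : SymF →+* Polynomial SymF) eSeries =
      rescale Polynomial.X (PowerSeries.map (algebraMap F (Polynomial SymF)) (mk eOneSubQ)) *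
        PowerSeries.map Polynomial.C eSeries := by
  refine (hasLogDeriv_eSeries.map _).eq_of_constantCoeff_eq ?_ ?_
  · rw [map_Tq_rescale_pSeries]
    exact ((hasLogDeriv_eOneSubQ.map _).rescale _).mul (hasLogDeriv_eSeries.map _)
  · rw [← PowerSeries.coeff_zero_eq_constantCoeff_apply,
      ← PowerSeries.coeff_zero_eq_constantCoeff_apply, PowerSeries.coeff_mul]
    simp [PowerSeries.coeff_rescale, eSeries, eN_zero]

theorem Tq_eN (m : ℕ) :
    Tq (eN m) = ∑ p ∈ antidiagonal m, Polynomial.monomial p.1 (eOneSubQ p.1 • eN p.2) := by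
  have h := congrArg (PowerSeries.coeff m) Tq_eSeries
  simp only [eSeries, PowerSeries.coeff_map, PowerSeries.coeff_mk, RingHom.coe_coe,
    PowerSeries.coeff_mul, PowerSeries.coeff_rescale, Polynomial.algebraMap_apply, algebraMap_eq,
    Polynomial.X_pow_mul_C, Polynomial.X_pow_mul_assoc_C] at h
  refine h.trans (sum_congr rfl fun p _ => ?_)
  rw [← Polynomial.C_mul, MvPolynomial.C_mul', Polynomial.C_mul_X_pow_eq_monomial]

theorem Cop_eq_lsum (m : ℤ) (P : SymF) :
    Cop m P = (-q⁻¹ : F) ^ (m - 1) •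
      Polynomial.lsum (fun r => (q⁻¹ : F) ^ r • LinearMap.mulLeft F (hh (m + r))) (Tq P) := by
  rw [Cop, Polynomial.lsum_apply, Polynomial.sum_over_range _ fun r => by simp]
  rfl

theorem Cop_sum {ι : Type*} (m : ℤ) (s : Finset ι) (P : ι → SymF) :
    Cop m (∑ i ∈ s, P i) = ∑ i ∈ s, Cop m (P i) := by
  simp only [Cop_eq_lsum, map_sum, smul_sum]

theorem Cop_eN (a b : ℕ) :
    Cop ((a + 1 : ℕ) : ℤ) (eN b) = ∑ p ∈ antidiagonal b,
      ((-1 : F) ^ a * q⁻¹ ^ (a + p.1) * eOneSubQ p.1) • (hN (a + p.1 + 1) * eN p.2) := by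
  rw [Cop_eq_lsum, Tq_eN, map_sum, smul_sum]
  refine sum_congr rfl fun p _ => ?_
  rw [Polynomial.lsum_apply, Polynomial.sum_monomial_index _ _ (by simp)]
  simp only [LinearMap.smul_apply, LinearMap.mulLeft_apply, mul_smul_comm, smul_smul]
  rw [show ((a + 1 : ℕ) : ℤ) + (p.1 : ℤ) = ((a + p.1 + 1 : ℕ) : ℤ) by push_cast; ring, hh_natCast,
    show ((a + 1 : ℕ) : ℤ) - 1 = (a : ℤ) by push_cast; ring, zpow_natCast, neg_pow, pow_add]
  ring_nf

theorem sum_antidiagonal_Cop_eN (n : ℕ) :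
    ∑ p ∈ antidiagonal n, Cop ((p.1 + 1 : ℕ) : ℤ) (eN p.2) = eN (n + 1) := by
  simp only [Cop_eN]
  rw [Nat.sum_antidiagonal_antidiagonal_assoc n fun a i j =>
    ((-1 : F) ^ a * q⁻¹ ^ (a + i) * eOneSubQ i) • (hN (a + i + 1) * eN j), eN_succ_eq_sum]
  refine sum_congr rfl fun s _ => ?_
  have hs : ∀ r ∈ antidiagonal s.1, ((-1 : F) ^ r.1 * q⁻¹ ^ (r.1 + r.2) * eOneSubQ r.2) •
      (hN (r.1 + r.2 + 1) * eN s.2) =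
      (q⁻¹ ^ s.1 * ((-1 : F) ^ r.1 * eOneSubQ r.2)) • (hN (s.1 + 1) * eN s.2) := by
    intro r hr
    rw [mem_antidiagonal.mp hr]
    ring_nf
  rw [sum_congr rfl hs, ← sum_smul, ← mul_sum, sum_antidiagonal_neg_one_pow_mul_eOneSubQ]
  congr 1
  rw [neg_pow, inv_pow, mul_left_comm, inv_mul_cancel₀ (pow_ne_zero _ RatFunc.X_ne_zero), mul_one]

/-- `e_n = ∑_{α ⊨ n} C_α[X;q]` for every `n ≥ 0`. -/
theorem stmt17 (n : ℕ) :
    ee n = ∑ α : Composition n, Cfun α.blocks := by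
  induction n using Nat.strong_induction_on with
  | _ n ih =>
    rcases n with _ | n
    · have hnil (c : Composition 0) : c.blocks = [] := c.blocks_eq_nil.mpr rfl
      rw [ee_natCast, eN_zero]
      simp [hnil, Cfun, composition_card]
    · rw [Composition.sum_blocks_succ, ee_natCast, ← sum_antidiagonal_Cop_eN]
      refine sum_congr rfl fun p hp => ?_
      rw [← ee_natCast, ih p.2 (Nat.antidiagonal.snd_lt hp), Cop_sum]
      rfl
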